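/- arXiv:2011.14074 — 2 statements merged into one kernel-verified Lean document; each statement's English description precedes it below -/
import Mathlib

section
/- If G is strongly self-embeddable, then G → (G, nK₂) for every n ≥ 1: every red-blue coloring of the edges of G with no n pairwise disjoint blue edges admits a red copy of G. -/
/-! Induction on `n`. If some edge `uv` is blue, strong self-embeddability (applied twice) gives a
copy `g` of `G` inside `G - u - v`. Pull the coloring back along `g` and apply the induction
hypothesis: a red `G` for the pulled-back coloring is mapped by `g` to a red `G`, and a blue `nK₂`
is mapped to a blue `nK₂` avoiding `u` and `v`, which `uv` extends to a blue `(n+1)K₂`. If no edge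
is blue, `G` itself is the red copy. -/

open SimpleGraph

/-- `G` embeds into `H`: an injective graph homomorphism (not necessarily induced). -/
def EmbedsIn {α β : Type*} (G : SimpleGraph α) (H : SimpleGraph β) : Prop :=
  ∃ f : G →g H, Function.Injective f

/-- `G` is self-embeddable: it admits an injective adjacency-preserving self-map whose
image, as a subgraph, is a proper subgraph (strictly smaller edge set). -/
def SelfEmbeddable {α : Type*} (G : SimpleGraph α) : Prop :=
  ∃ f : G →g G, Function.Injective f ∧ Sym2.map f '' G.edgeSet ⊂ G.edgeSet

/-- `G` is strongly self-embeddable: `G` embeds into `G - v` for every vertex `v`. -/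
def StronglySelfEmbeddable {α : Type*} (G : SimpleGraph α) : Prop :=
  ∀ v : α, EmbedsIn G (G.induce ({v}ᶜ : Set α))

/-- The subgraph of `F` consisting of the edges with color `b` under coloring `c`. -/
def colorSubgraph {α : Type*} (F : SimpleGraph α) (c : Sym2 α → Bool) (b : Bool) :
    SimpleGraph α where
  Adj x y := F.Adj x y ∧ c s(x, y) = b
  symm := by
    constructor
    intro x y h
    exact ⟨h.1.symm, by rw [Sym2.eq_swap]; exact h.2⟩
  loopless := by constructor; intro x h; exact F.irrefl h.1

/-- `F → (G, H)` : every red-blue coloring of the edges of `F` yields a red copy of `G`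
or a blue copy of `H` (here `true` = red, `false` = blue). -/
def Arrows {α β γ : Type*} (F : SimpleGraph α) (G : SimpleGraph β) (H : SimpleGraph γ) : Prop :=
  ∀ c : Sym2 α → Bool,
    EmbedsIn G (colorSubgraph F c true) ∨ EmbedsIn H (colorSubgraph F c false)

/-- `F` is `(G,H)`-minimal: it arrows `(G,H)` but no proper subgraph of it does. -/
def RamseyMinimal {α β γ : Type*} (F : SimpleGraph α) (G : SimpleGraph β)
    (H : SimpleGraph γ) : Prop :=
  Arrows F G H ∧ ∀ F' : SimpleGraph α, F' < F → ¬ Arrows F' G H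

/-- `G` has no isolated vertices. -/
def NoIsolated {α : Type*} (G : SimpleGraph α) : Prop := ∀ v, ∃ w, G.Adj v w

/-- The single-edge graph `K₂`. -/
def K2 : SimpleGraph (Fin 2) := ⊤

/-- The matching `nK₂` with `n` pairwise disjoint edges. -/
def Matching (n : ℕ) : SimpleGraph (Fin n × Fin 2) where
  Adj a b := a.1 = b.1 ∧ a.2 ≠ b.2
  symm := by constructor; intro a b h; exact ⟨h.1.symm, h.2.symm⟩
  loopless := by constructor; intro a h; exact h.2 rfl

/-- The disjoint union `nG` of `n` copies of `G`. -/
def nCopies {V : Type*} (n : ℕ) (G : SimpleGraph V) : SimpleGraph (Fin n × V) where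
  Adj a b := a.1 = b.1 ∧ G.Adj a.2 b.2
  symm := by constructor; intro a b h; exact ⟨h.1.symm, h.2.symm⟩
  loopless := by constructor; intro a h; exact G.irrefl h.2

/-- The infinite star `S_∞ = K_{1,∞}`, with center `none`. -/
def InfStar : SimpleGraph (Option ℕ) := SimpleGraph.fromRel (fun a _ => a = none)

/-- The finite star `K_{1,n}`, with center `none`. -/
def StarN (n : ℕ) : SimpleGraph (Option (Fin n)) := SimpleGraph.fromRel (fun a _ => a = none)

/-- The ray `P_∞` (one-way infinite path) on `ℕ`. -/
def Ray : SimpleGraph ℕ := SimpleGraph.fromRel (fun a b => b = a + 1)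

/-- The `k`-ray `P_{k∞}`: `k` rays glued at a common endpoint `none`. -/
def kRay (k : ℕ) : SimpleGraph (Option (Fin k × ℕ)) :=
  SimpleGraph.fromRel (fun a b =>
    (a = none ∧ ∃ i, b = some (i, 0)) ∨ (∃ i n, a = some (i, n) ∧ b = some (i, n + 1)))

theorem embedsIn_iff_isContained {α β : Type*} {G : SimpleGraph α} {H : SimpleGraph β} :
    EmbedsIn G H ↔ G ⊑ H :=
  ⟨fun ⟨f, hf⟩ => ⟨f.toCopy hf⟩, fun ⟨f⟩ => ⟨f.toHom, f.injective⟩⟩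

namespace StronglySelfEmbeddable

variable {V : Type*} {G : SimpleGraph V}

theorem exists_copy_avoiding (h : StronglySelfEmbeddable G) (v : V) :
    ∃ f : Copy G G, ∀ x, f x ≠ v := by
  obtain ⟨f, hf⟩ := h v
  exact ⟨⟨(Embedding.induce _).toHom.comp f, Subtype.val_injective.comp hf⟩, fun x => (f x).2⟩

theorem exists_copy_avoiding_of_finite (h : StronglySelfEmbeddable G) {s : Set V}
    (hs : s.Finite) : ∃ f : Copy G G, ∀ x, f x ∉ s := by
  induction s, hs using Set.Finite.induction_on with
  | empty => exact ⟨.id G, fun _ => id⟩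
  | @insert a s _ _ ih =>
    obtain ⟨f, hfs⟩ := ih
    by_cases ha : ∃ w, f w = a
    · obtain ⟨w, rfl⟩ := ha
      obtain ⟨g, hgw⟩ := h.exists_copy_avoiding w
      exact ⟨f.comp g, fun x => not_or_intro (f.injective.ne (hgw x)) (hfs _)⟩
    · exact ⟨f, fun x => not_or_intro (fun hx => ha ⟨x, hx⟩) (hfs x)⟩

end StronglySelfEmbeddable

section Coloring

variable {α β : Type*} {G : SimpleGraph α} {F : SimpleGraph β}

theorem colorSubgraph_eq_self {c : Sym2 β → Bool} {b : Bool} (hc : ∀ e ∈ F.edgeSet, c e = b) :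
    colorSubgraph F c b = F := by
  ext x y
  exact ⟨And.left, fun hxy => ⟨hxy, hc _ hxy⟩⟩

def SimpleGraph.Copy.colorSubgraph (f : Copy G F) (c : Sym2 β → Bool) (b : Bool) :
    Copy (_root_.colorSubgraph G (c ∘ Sym2.map f) b) (_root_.colorSubgraph F c b) :=
  ⟨⟨f, fun {x y} hxy => ⟨f.toHom.map_adj hxy.1, by simpa using hxy.2⟩⟩, f.injective⟩

end Coloring

theorem Matching.isContained_succ {β : Type*} {H : SimpleGraph β} {n : ℕ}
    (f : Copy (Matching n) H) {u v : β} (huv : H.Adj u v) (hu : ∀ p, f p ≠ u)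
    (hv : ∀ p, f p ≠ v) : Matching (n + 1) ⊑ H := by
  let g : Fin (n + 1) × Fin 2 → β := fun p =>
    Fin.lastCases (![u, v] p.2) (fun i => f (i, p.2)) p.1
  have g_last (j : Fin 2) : g (Fin.last n, j) = ![u, v] j := Fin.lastCases_last
  have g_castSucc (i : Fin n) (j : Fin 2) : g (i.castSucc, j) = f (i, j) := Fin.lastCases_castSucc _
  have g_adj : ∀ {p q}, (Matching (n + 1)).Adj p q → H.Adj (g p) (g q) := by
    rintro ⟨i, j⟩ ⟨i', j'⟩ ⟨hii' : i = i', hjj' : j ≠ j'⟩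
    subst hii'
    cases i using Fin.lastCases with
    | last => fin_cases j <;> fin_cases j' <;> simp_all [huv.symm]
    | cast i =>
      simpa [g_castSucc] using
        f.toHom.map_adj (show (Matching n).Adj (i, j) (i, j') from ⟨rfl, hjj'⟩)
  refine ⟨⟨⟨g, g_adj⟩, ?_⟩⟩
  rintro ⟨i, j⟩ ⟨i', j'⟩ (hgg : g (i, j) = g (i', j'))
  have huv' : u ≠ v := huv.ne
  cases i using Fin.lastCases <;> cases i' using Fin.lastCases
  · fin_cases j <;> fin_cases j' <;> simp_all
  · exact absurd hgg.symm (by fin_cases j <;> simp [g_last, g_castSucc, hu, hv])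
  · exact absurd hgg (by fin_cases j' <;> simp [g_last, g_castSucc, hu, hv])
  · simp only [g_castSucc] at hgg
    simpa using f.injective hgg

theorem StronglySelfEmbeddable.arrows_matching_succ {V : Type*} {G : SimpleGraph V}
    (h : StronglySelfEmbeddable G) {n : ℕ} (hn : Arrows G G (Matching n)) :
    Arrows G G (Matching (n + 1)) := by
  intro c
  simp only [Arrows, embedsIn_iff_isContained] at hn ⊢
  by_cases hblue : ∃ u v, G.Adj u v ∧ c s(u, v) = false
  · obtain ⟨u, v, huv, hc⟩ := hblue
    obtain ⟨g, hg⟩ := h.exists_copy_avoiding_of_finite (Set.toFinite {u, v})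
    rcases hn (c ∘ Sym2.map g) with hred | hmatching
    · exact .inl (hred.trans ⟨g.colorSubgraph c true⟩)
    · obtain ⟨m⟩ := hmatching
      exact .inr (Matching.isContained_succ ((g.colorSubgraph c false).comp m) ⟨huv, hc⟩
        (fun p hp => hg (m p) (.inl hp)) (fun p hp => hg (m p) (.inr hp)))
  · push Not at hblue
    refine .inl (.of_le (colorSubgraph_eq_self fun e he => ?_).ge)
    induction e using Sym2.ind with
    | _ x y => simpa using hblue x y he

theorem stmt15_general {V : Type} (G : SimpleGraph V) (h : StronglySelfEmbeddable G)
    (n : ℕ) :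
    Arrows G G (Matching n) := by
  induction n with
  | zero => exact fun _ => .inr (embedsIn_iff_isContained.2 .of_isEmpty)
  | succ n ih => exact h.arrows_matching_succ ih

/-- If `G` is strongly self-embeddable then `G → (G, nK₂)` for every `n ≥ 1`. -/
theorem stmt15 {V : Type} (G : SimpleGraph V) (h : StronglySelfEmbeddable G)
    (n : ℕ) (hn : 1 ≤ n) :
    Arrows G G (Matching n) :=
  stmt15_general G h n
end

section
/- If G is strongly self-embeddable, then for every n ≥ 2 there is no (G, nK₂)-minimal graph. -/
open SimpleGraph

/-
A `(G, nK₂)`-arrowing graph `F` has an edge `ab`, and `F - ab` still arrows: colour `ab` red and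
the rest as prescribed. A blue matching cannot use the red edge `ab`; a red copy of `G`
can be moved, by strong self-embeddability, to a copy missing the vertex `a`, hence the edge `ab`.
So `F` is never minimal.
-/

section

variable {V W : Type*} {G : SimpleGraph V} {H : SimpleGraph W}

theorem StronglySelfEmbeddable.exists_injective_hom_not_mem_range
    (hG : StronglySelfEmbeddable G) {f : G →g H} (hf : Function.Injective f) (a : W) :
    ∃ g : G →g H, Function.Injective g ∧ a ∉ Set.range g := by
  by_cases ha : a ∈ Set.range f
  · obtain ⟨x, rfl⟩ := ha
    obtain ⟨ψ, hψ⟩ := hG x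
    refine ⟨f.comp ((Embedding.induce _).toHom.comp ψ),
      hf.comp (Subtype.val_injective.comp hψ), ?_⟩
    rintro ⟨z, hz⟩
    exact (ψ z).2 (hf hz)
  · exact ⟨f, hf, ha⟩

theorem colorSubgraph_deleteEdges_adj_of_ne {F : SimpleGraph W} {c c' : Sym2 W → Bool}
    {e : Sym2 W} (hc : ∀ s, s ≠ e → c' s = c s) {b : Bool} {x y : W}
    (hxy : (colorSubgraph F c' b).Adj x y)
    (he : s(x, y) ≠ e) : (colorSubgraph (F.deleteEdges {e}) c b).Adj x y :=
  ⟨(deleteEdges_adj ..).2 ⟨hxy.1, he⟩, hc _ he ▸ hxy.2⟩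

theorem Arrows.deleteEdges_of_stronglySelfEmbeddable {U : Type*} {F : SimpleGraph U}
    (hF : Arrows F G H) (hG : StronglySelfEmbeddable G) (a b : U) :
    Arrows (F.deleteEdges {s(a, b)}) G H := by
  classical
  intro c
  set c' : Sym2 U → Bool := fun s => if s = s(a, b) then true else c s
  have hc : ∀ s, s ≠ s(a, b) → c' s = c s := fun s hs => if_neg hs
  rcases hF c' with ⟨f, hf⟩ | ⟨f, hf⟩
  · obtain ⟨g, hg, ha⟩ := hG.exists_injective_hom_not_mem_range hf a
    refine .inl ⟨⟨g, fun hxy => colorSubgraph_deleteEdges_adj_of_ne hc (g.map_rel hxy) ?_⟩,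
      hg⟩
    rintro h
    rcases Sym2.mem_iff.1 (h ▸ Sym2.mem_mk_left a b : a ∈ s(g _, g _)) with h | h <;>
      exact ha ⟨_, h.symm⟩
  · refine .inr ⟨⟨f, fun hxy => colorSubgraph_deleteEdges_adj_of_ne hc (f.map_rel hxy) ?_⟩,
      hf⟩
    rintro h
    have := (f.map_rel hxy).2
    simp [c', h] at this

theorem Arrows.exists_adj {U : Type*} {F : SimpleGraph U} (hF : Arrows F G H)
    (hG : ∃ x y, G.Adj x y) (hH : ∃ x y, H.Adj x y) : ∃ a b, F.Adj a b := by
  rcases hF fun _ => true with ⟨f, -⟩ | ⟨f, -⟩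
  · obtain ⟨x, y, hxy⟩ := hG
    exact ⟨_, _, (f.map_rel hxy).1⟩
  · obtain ⟨x, y, hxy⟩ := hH
    exact ⟨_, _, (f.map_rel hxy).1⟩

theorem SimpleGraph.deleteEdges_lt_of_adj {F : SimpleGraph W} {a b : W} (hab : F.Adj a b) :
    F.deleteEdges {s(a, b)} < F :=
  lt_of_le_of_ne (deleteEdges_le _) fun h => by
    have := hab
    rw [← h, deleteEdges_adj] at this
    simp at this

end

/-- If `G` is strongly self-embeddable, then for every `n ≥ 2` there is no
`(G, nK₂)`-minimal graph. -/
theorem stmt16 {V : Type} [Nonempty V] (G : SimpleGraph V) (hni : NoIsolated G)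
    (h : StronglySelfEmbeddable G) (n : ℕ) (hn : 2 ≤ n) :
    ∀ (W : Type) (F : SimpleGraph W), ¬ RamseyMinimal F G (Matching n) := by
  rintro W F ⟨hF, hmin⟩
  have hG : ∃ x y, G.Adj x y := ⟨_, hni (Classical.arbitrary V)⟩
  have hM : ∃ x y, (Matching n).Adj x y :=
    ⟨(⟨0, by omega⟩, 0), (⟨0, by omega⟩, 1), rfl, Fin.zero_ne_one⟩
  obtain ⟨a, b, hab⟩ := hF.exists_adj hG hM
  exact hmin _ (deleteEdges_lt_of_adj hab) (hF.deleteEdges_of_stronglySelfEmbeddable h a b)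
end
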